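/- arXiv:2405.15408 — 4 statements merged into one kernel-verified Lean document; each statement's English description precedes it below -/
import Mathlib

section
/- Let Σ¹, Σ², Σ³ be antisymmetric real 4×4 matrices such that ∑_{μ,ν,ρ,σ} ε_{μνρσ} Σⁱ_{μν} Σʲ_{ρσ} = 8 v δ^{ij} for all i,j and some real v ≠ 0, and suppose the orientation condition holds: for all X, Y ∈ ℝ⁴ with ∑_μ X_μ Σ¹_{μν} = ∑_μ Y_μ Σ²_{μν} for every ν, one has ∑_{μ,ν} Σ³_{μν} X_μ Y_ν ≤ 0. Define g : ℝ⁴ × ℝ⁴ → ℝ by g(X,Y) := −(1/(12v)) · ∑_{i,j,k} ∑_{μ,ν,ρ,σ,α,β} ε^{ijk} ε_{μνρσ} X_α Σⁱ_{αμ} Y_β Σʲ_{βν} Σᵏ_{ρσ} (the coordinate form of the formula g(X,Y)·vol_Σ = −(1/6) ε^{ijk} i_XΣⁱ ∧ i_YΣʲ ∧ Σᵏ). Then g is a symmetric, positive-definite bilinear form on ℝ⁴. -/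
open Matrix BigOperators

/-- Levi-Civita symbol on four indices, `ε 0 1 2 3 = 1`. -/
noncomputable def eps4 (μ ν ρ σ : Fin 4) : ℝ :=
  Matrix.det (Matrix.of fun a b => if ![μ, ν, ρ, σ] a = b then (1 : ℝ) else 0)

/-- Levi-Civita symbol on three indices, `ε 0 1 2 = 1`. -/
noncomputable def eps3 (i j k : Fin 3) : ℝ :=
  Matrix.det (Matrix.of fun a b => if ![i, j, k] a = b then (1 : ℝ) else 0)

/-- The Urbantke metric defined by a triple of 2-forms:
`g(X,Y) := −(1/(12v)) ε^{ijk} ε_{μνρσ} X_α Σⁱ_{αμ} Y_β Σʲ_{βν} Σᵏ_{ρσ}`. -/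
noncomputable def urbantke (v : ℝ) (Sig : Fin 3 → Matrix (Fin 4) (Fin 4) ℝ)
    (X Y : Fin 4 → ℝ) : ℝ :=
  -(1 / (12 * v)) * ∑ i, ∑ j, ∑ k, ∑ μ, ∑ ν, ∑ ρ, ∑ σ, ∑ α, ∑ β,
    eps3 i j k * eps4 μ ν ρ σ * X α * Sig i α μ * Y β * Sig j β ν * Sig k ρ σ

/-!
Write `⋆` for the Hodge dual of an antisymmetric 4 × 4 matrix and `⟨A ∧ B⟩` for the scalar
`ε_{μνρσ} A_{μν} B_{ρσ}`. A direct computation gives the Clifford-type identities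
`A ⋆B + B ⋆A = ⋆A B + ⋆B A = -(⟨A ∧ B⟩ / 4) · 1`, so the normalisation
`⟨Σⁱ ∧ Σʲ⟩ = 8 v δⁱʲ` makes `Σⁱ ⋆Σʲ` and `⋆Σⁱ Σʲ` anticommute for `i ≠ j` and gives
`Σⁱ ⋆Σⁱ = -v`. Contracting the Levi-Civita symbols turns the Urbantke formula into
`g(X, Y) = Xᵀ P Y` with `P = v⁻¹ Σ¹ ⋆Σ³ Σ²`, and the anticommutation relations show that `P` is
symmetric and equal to `v⁻¹ Σ³ ⋆Σ² Σ¹`. Feeding `Y = (Σ²)⁻¹ Σ¹ X = -v⁻¹ ⋆Σ² Σ¹ X` into the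
orientation condition gives `Xᵀ P X ≥ 0`; finally `P` is invertible because every `Σⁱ` is, and an
invertible positive semidefinite matrix is positive definite. (`Σ¹, Σ², Σ³` are `Sig 0, Sig 1,
Sig 2` in the code.)
-/

theorem Matrix.of_indicator_mul_vandermonde {R : Type*} [CommRing R] {n : ℕ} (f : Fin n → Fin n) :
    of (fun a b => if f a = b then (1 : R) else 0) * vandermonde (fun i => (i : R))
      = vandermonde (fun i => (f i : R)) := by
  ext a k
  simp [mul_apply, vandermonde_apply]

-- `ε` is a quotient of Vandermonde determinants, which makes its values computable.
theorem eps4_eq (μ ν ρ σ : Fin 4) :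
    eps4 μ ν ρ σ = ((ν : ℝ) - μ) * (ρ - μ) * (σ - μ) * (ρ - ν) * (σ - ν) * (σ - ρ) / 12 := by
  have h := congrArg det (Matrix.of_indicator_mul_vandermonde (R := ℝ) ![μ, ν, ρ, σ])
  simp [det_mul, det_vandermonde, Fin.prod_univ_succ, Fin.prod_Ioi_succ] at h
  rw [eq_div_iff (by norm_num), eps4]
  linear_combination h

theorem eps3_eq (i j k : Fin 3) :
    eps3 i j k = ((j : ℝ) - i) * (k - i) * (k - j) / 2 := by
  have h := congrArg det (Matrix.of_indicator_mul_vandermonde (R := ℝ) ![i, j, k])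
  simp [det_mul, det_vandermonde, Fin.prod_univ_succ, Fin.prod_Ioi_succ] at h
  rw [eq_div_iff (by norm_num), eps3]
  linear_combination h

theorem eps4_swap (μ ν ρ σ : Fin 4) : eps4 ν μ ρ σ = -eps4 μ ν ρ σ := by
  rw [eps4_eq, eps4_eq]; ring

noncomputable def hodgeDual (M : Matrix (Fin 4) (Fin 4) ℝ) : Matrix (Fin 4) (Fin 4) ℝ :=
  of fun μ ν => (1 / 2) * ∑ ρ, ∑ σ, eps4 μ ν ρ σ * M ρ σ

noncomputable def wedgePairing (A B : Matrix (Fin 4) (Fin 4) ℝ) : ℝ :=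
  ∑ μ, ∑ ν, ∑ ρ, ∑ σ, eps4 μ ν ρ σ * A μ ν * B ρ σ

def antisymm4 (a b c d e f : ℝ) : Matrix (Fin 4) (Fin 4) ℝ :=
  !![0, a, b, c; -a, 0, d, e; -b, -d, 0, f; -c, -e, -f, 0]

theorem eq_antisymm4_of_transpose_eq_neg {A : Matrix (Fin 4) (Fin 4) ℝ} (hA : Aᵀ = -A) :
    A = antisymm4 (A 0 1) (A 0 2) (A 0 3) (A 1 2) (A 1 3) (A 2 3) := by
  have hswap (i j : Fin 4) : A j i = -A i j := congrFun (congrFun hA i) j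
  have hdiag (i : Fin 4) : A i i = 0 := by linarith [hswap i i]
  ext i j
  fin_cases i <;> fin_cases j <;> first | exact hdiag _ | exact hswap _ _ | rfl

theorem hodgeDual_antisymm4 (a b c d e f : ℝ) :
    hodgeDual (antisymm4 a b c d e f) = antisymm4 f (-e) d c (-b) a := by
  ext μ ν
  simp only [hodgeDual, of_apply, Fin.sum_univ_four, eps4_eq]
  fin_cases μ <;> fin_cases ν <;> simp [antisymm4] <;> ring

theorem wedgePairing_antisymm4 (a b c d e f a' b' c' d' e' f' : ℝ) :
    wedgePairing (antisymm4 a b c d e f) (antisymm4 a' b' c' d' e' f')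
      = 4 * (a * f' + a' * f - b * e' - b' * e + c * d' + c' * d) := by
  simp only [wedgePairing, Fin.sum_univ_four, eps4_eq]
  simp [antisymm4]
  ring

theorem hodgeDual_transpose (M : Matrix (Fin 4) (Fin 4) ℝ) : (hodgeDual M)ᵀ = -hodgeDual M := by
  ext μ ν
  simp only [transpose_apply, Matrix.neg_apply, hodgeDual, of_apply, eps4_swap μ ν, neg_mul,
    Finset.sum_neg_distrib, mul_neg]

theorem mul_hodgeDual_add_mul_hodgeDual {A B : Matrix (Fin 4) (Fin 4) ℝ}
    (hA : Aᵀ = -A) (hB : Bᵀ = -B) :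
    A * hodgeDual B + B * hodgeDual A = -(wedgePairing A B / 4) • 1 := by
  rw [eq_antisymm4_of_transpose_eq_neg hA, eq_antisymm4_of_transpose_eq_neg hB,
    wedgePairing_antisymm4, hodgeDual_antisymm4, hodgeDual_antisymm4]
  ext i j
  fin_cases i <;> fin_cases j <;> simp [antisymm4, one_apply] <;> ring

theorem hodgeDual_mul_add_hodgeDual_mul {A B : Matrix (Fin 4) (Fin 4) ℝ}
    (hA : Aᵀ = -A) (hB : Bᵀ = -B) :
    hodgeDual A * B + hodgeDual B * A = -(wedgePairing A B / 4) • 1 := by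
  have h := congrArg transpose (mul_hodgeDual_add_mul_hodgeDual hA hB)
  rwa [transpose_add, transpose_mul, transpose_mul, hodgeDual_transpose, hodgeDual_transpose,
    hA, hB, neg_mul_neg, neg_mul_neg, add_comm, transpose_smul, transpose_one] at h

theorem mul_hodgeDual_self {A : Matrix (Fin 4) (Fin 4) ℝ} (hA : Aᵀ = -A) :
    A * hodgeDual A = -(wedgePairing A A / 8) • 1 := by
  have h := mul_hodgeDual_add_mul_hodgeDual hA hA
  rw [← two_smul ℝ] at h
  rw [← inv_smul_smul₀ (two_ne_zero (α := ℝ)) (A * hodgeDual A), h, smul_smul]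
  congr 1
  ring

theorem mul_hodgeDual_anticomm {A B : Matrix (Fin 4) (Fin 4) ℝ} (hA : Aᵀ = -A) (hB : Bᵀ = -B)
    (hAB : wedgePairing A B = 0) : A * hodgeDual B = -(B * hodgeDual A) := by
  rw [eq_neg_iff_add_eq_zero, mul_hodgeDual_add_mul_hodgeDual hA hB, hAB]
  simp

theorem hodgeDual_mul_anticomm {A B : Matrix (Fin 4) (Fin 4) ℝ} (hA : Aᵀ = -A) (hB : Bᵀ = -B)
    (hAB : wedgePairing A B = 0) : hodgeDual A * B = -(hodgeDual B * A) := by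
  rw [eq_neg_iff_add_eq_zero, hodgeDual_mul_add_hodgeDual_mul hA hB, hAB]
  simp

theorem sum_eps4_eq_dotProduct_hodgeDual_mulVec (u w : Fin 4 → ℝ) (C : Matrix (Fin 4) (Fin 4) ℝ) :
    ∑ μ, ∑ ν, ∑ ρ, ∑ σ, eps4 μ ν ρ σ * u μ * w ν * C ρ σ = 2 * (u ⬝ᵥ hodgeDual C *ᵥ w) := by
  simp only [dotProduct, mulVec, hodgeDual, of_apply, Finset.mul_sum, Finset.sum_mul]
  refine Finset.sum_congr rfl fun μ _ => Finset.sum_congr rfl fun ν _ =>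
    Finset.sum_congr rfl fun ρ _ => Finset.sum_congr rfl fun σ _ => ?_
  ring

theorem sum_eps4_eq_dotProduct_mul_hodgeDual_mul_mulVec (X Y : Fin 4 → ℝ)
    (A B C : Matrix (Fin 4) (Fin 4) ℝ) :
    ∑ μ, ∑ ν, ∑ ρ, ∑ σ, ∑ α, ∑ β, eps4 μ ν ρ σ * X α * A α μ * Y β * B β ν * C ρ σ
      = 2 * (X ⬝ᵥ (A * hodgeDual C * Bᵀ) *ᵥ Y) := by
  rw [← mulVec_mulVec, dotProduct_mulVec, ← vecMul_vecMul, ← dotProduct_mulVec, mulVec_transpose,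
    ← sum_eps4_eq_dotProduct_hodgeDual_mulVec]
  refine Finset.sum_congr rfl fun μ _ => Finset.sum_congr rfl fun ν _ =>
    Finset.sum_congr rfl fun ρ _ => Finset.sum_congr rfl fun σ _ => ?_
  simp only [vecMul, dotProduct, Finset.mul_sum, Finset.sum_mul]
  rw [Finset.sum_comm]
  refine Finset.sum_congr rfl fun α _ => Finset.sum_congr rfl fun β _ => ?_
  ring

theorem urbantke_eq_dotProduct_mulVec (v : ℝ) (Sig : Fin 3 → Matrix (Fin 4) (Fin 4) ℝ)
    (X Y : Fin 4 → ℝ) :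
    urbantke v Sig X Y = X ⬝ᵥ ((-(1 / (6 * v))) •
      ∑ i, ∑ j, ∑ k, eps3 i j k • (Sig i * hodgeDual (Sig k) * (Sig j)ᵀ)) *ᵥ Y := by
  have hijk (i j k : Fin 3) :
      ∑ μ, ∑ ν, ∑ ρ, ∑ σ, ∑ α, ∑ β,
        eps3 i j k * eps4 μ ν ρ σ * X α * Sig i α μ * Y β * Sig j β ν * Sig k ρ σ
      = 2 * (eps3 i j k * (X ⬝ᵥ (Sig i * hodgeDual (Sig k) * (Sig j)ᵀ) *ᵥ Y)) := by
    rw [mul_left_comm, ← sum_eps4_eq_dotProduct_mul_hodgeDual_mul_mulVec]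
    simp only [Finset.mul_sum, mul_assoc]
  simp only [urbantke, hijk, ← Finset.mul_sum, smul_mulVec, sum_mulVec, dotProduct_smul,
    dotProduct_sum, smul_eq_mul]
  ring

section Anticommuting

variable {R : Type*} [Ring R] {A B : Fin 3 → R}

theorem mul_mul_eq_neg_of_anticomm (hAB : ∀ i j, i ≠ j → A i * B j = -(A j * B i))
    (hBA : ∀ i j, i ≠ j → B i * A j = -(B j * A i)) :
    A 1 * B 2 * A 0 = -(A 0 * B 2 * A 1) := by
  rw [hAB 1 2 (by decide), neg_mul, mul_assoc, hBA 1 0 (by decide), mul_neg, neg_neg,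
    ← mul_assoc, hAB 2 0 (by decide), neg_mul]

theorem mul_mul_eq_of_anticomm (hAB : ∀ i j, i ≠ j → A i * B j = -(A j * B i))
    (hBA : ∀ i j, i ≠ j → B i * A j = -(B j * A i)) :
    A 2 * B 1 * A 0 = A 0 * B 2 * A 1 := by
  rw [mul_assoc, hBA 1 0 (by decide), mul_neg, ← mul_assoc, hAB 2 0 (by decide), neg_mul,
    neg_neg]

theorem sum_eps3_smul_mul_mul [Module ℝ R] (hAB : ∀ i j, i ≠ j → A i * B j = -(A j * B i))
    (hBA : ∀ i j, i ≠ j → B i * A j = -(B j * A i)) :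
    ∑ i, ∑ j, ∑ k, eps3 i j k • (A i * B k * A j) = (6 : ℝ) • (A 0 * B 2 * A 1) := by
  have h021 : A 0 * B 1 * A 2 = -(A 0 * B 2 * A 1) := by
    rw [mul_assoc, hBA 1 2 (by decide), mul_neg, ← mul_assoc]
  have h102 : A 1 * B 0 * A 2 = A 0 * B 2 * A 1 := by
    rw [hAB 1 0 (by decide), neg_mul, h021, neg_neg]
  have h201 : A 2 * B 0 * A 1 = -(A 0 * B 2 * A 1) := by
    rw [hAB 2 0 (by decide), neg_mul]
  simp [Fin.sum_univ_three, eps3_eq, h021, h102, h201, mul_mul_eq_neg_of_anticomm hAB hBA,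
    mul_mul_eq_of_anticomm hAB hBA]
  module

end Anticommuting

theorem Matrix.det_ne_zero_of_mul_eq_smul_one {n K : Type*} [Fintype n] [DecidableEq n] [Field K]
    {A B : Matrix n n K} {c : K} (hc : c ≠ 0) (h : A * B = c • 1) : A.det ≠ 0 ∧ B.det ≠ 0 := by
  have hdet := congrArg det h
  rw [det_mul, det_smul, det_one, mul_one] at hdet
  exact mul_ne_zero_iff.mp (hdet ▸ pow_ne_zero _ hc)

theorem sum_sum_mul_mul_eq_dotProduct_mulVec {n : Type*} [Fintype n] (M : Matrix n n ℝ)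
    (X Y : n → ℝ) : ∑ μ, ∑ ν, M μ ν * X μ * Y ν = X ⬝ᵥ M *ᵥ Y := by
  simp only [dotProduct, mulVec, Finset.mul_sum]
  exact Finset.sum_congr rfl fun μ _ => Finset.sum_congr rfl fun ν _ => by ring

theorem dotProduct_mulVec_nonneg_of_orientation {n : Type*} [Fintype n] [DecidableEq n]
    {A₀ A₁ A₂ B : Matrix n n ℝ} {c : ℝ} (hc : c ≠ 0) (hA₀ : A₀ᵀ = -A₀) (hA₁ : A₁ᵀ = -A₁)
    (hB : A₁ * B = c • 1) (horient : ∀ X Y, X ᵥ* A₀ = Y ᵥ* A₁ → X ⬝ᵥ A₂ *ᵥ Y ≤ 0)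
    (X : n → ℝ) : 0 ≤ X ⬝ᵥ (-c⁻¹ • (A₂ * B * A₀)) *ᵥ X := by
  have hY : X ᵥ* A₀ = (c⁻¹ • (B *ᵥ (A₀ *ᵥ X))) ᵥ* A₁ := by
    rw [← mulVec_transpose, ← mulVec_transpose, hA₀, hA₁, neg_mulVec, neg_mulVec, mulVec_smul,
      mulVec_mulVec, hB, smul_mulVec, one_mulVec, smul_smul, inv_mul_cancel₀ hc, one_smul]
  have h := horient X _ hY
  rw [mulVec_smul, dotProduct_smul, smul_eq_mul, mulVec_mulVec] at h
  rw [neg_smul, neg_mulVec, dotProduct_neg, smul_mulVec, dotProduct_smul, smul_eq_mul,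
    ← mulVec_mulVec]
  linarith

noncomputable def urbantkeMatrix (v : ℝ) (Sig : Fin 3 → Matrix (Fin 4) (Fin 4) ℝ) :
    Matrix (Fin 4) (Fin 4) ℝ :=
  v⁻¹ • (Sig 0 * hodgeDual (Sig 2) * Sig 1)

section UrbantkeMatrix

variable {v : ℝ} {Sig : Fin 3 → Matrix (Fin 4) (Fin 4) ℝ}

theorem urbantke_eq_dotProduct_urbantkeMatrix (hanti : ∀ i, (Sig i)ᵀ = -Sig i)
    (hAB : ∀ i j, i ≠ j → Sig i * hodgeDual (Sig j) = -(Sig j * hodgeDual (Sig i)))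
    (hBA : ∀ i j, i ≠ j → hodgeDual (Sig i) * Sig j = -(hodgeDual (Sig j) * Sig i))
    (X Y : Fin 4 → ℝ) : urbantke v Sig X Y = X ⬝ᵥ urbantkeMatrix v Sig *ᵥ Y := by
  simp only [urbantke_eq_dotProduct_mulVec, hanti, mul_neg, smul_neg, Finset.sum_neg_distrib,
    sum_eps3_smul_mul_mul hAB hBA, smul_smul, urbantkeMatrix]
  rw [← neg_smul, show -(-(1 / (6 * v)) * 6) = v⁻¹ by ring]

theorem urbantkeMatrix_transpose (hanti : ∀ i, (Sig i)ᵀ = -Sig i)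
    (hAB : ∀ i j, i ≠ j → Sig i * hodgeDual (Sig j) = -(Sig j * hodgeDual (Sig i)))
    (hBA : ∀ i j, i ≠ j → hodgeDual (Sig i) * Sig j = -(hodgeDual (Sig j) * Sig i)) :
    (urbantkeMatrix v Sig)ᵀ = urbantkeMatrix v Sig := by
  simp only [urbantkeMatrix, transpose_smul, transpose_mul, hanti, hodgeDual_transpose,
    mul_neg, neg_mul, neg_neg, ← mul_assoc, mul_mul_eq_neg_of_anticomm hAB hBA]

theorem urbantkeMatrix_posDef (hv : v ≠ 0) (hanti : ∀ i, (Sig i)ᵀ = -Sig i)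
    (hself : ∀ i, Sig i * hodgeDual (Sig i) = -v • 1)
    (hAB : ∀ i j, i ≠ j → Sig i * hodgeDual (Sig j) = -(Sig j * hodgeDual (Sig i)))
    (hBA : ∀ i j, i ≠ j → hodgeDual (Sig i) * Sig j = -(hodgeDual (Sig j) * Sig i))
    (horient : ∀ X Y, X ᵥ* Sig 0 = Y ᵥ* Sig 1 → X ⬝ᵥ Sig 2 *ᵥ Y ≤ 0) :
    (urbantkeMatrix v Sig).PosDef := by
  have hpsd : (urbantkeMatrix v Sig).PosSemidef := by
    refine posSemidef_iff_dotProduct_mulVec.mpr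
      ⟨urbantkeMatrix_transpose hanti hAB hBA, fun X => ?_⟩
    have h := dotProduct_mulVec_nonneg_of_orientation (neg_ne_zero.mpr hv) (hanti 0) (hanti 1)
      (hself 1) horient X
    rwa [inv_neg, neg_neg, mul_mul_eq_of_anticomm hAB hBA] at h
  have hdet (i : Fin 3) := det_ne_zero_of_mul_eq_smul_one (neg_ne_zero.mpr hv) (hself i)
  rw [hpsd.posDef_iff_det_ne_zero, urbantkeMatrix, det_smul, det_mul, det_mul]
  exact mul_ne_zero (pow_ne_zero _ (inv_ne_zero hv))
    (mul_ne_zero (mul_ne_zero (hdet 0).1 (hdet 2).2) (hdet 1).1)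

end UrbantkeMatrix

/-- the Urbantke formula produces a symmetric positive-definite
bilinear form from an oriented `SU(2)`-structure. -/
theorem urbantke_metric_pos_def
    (Sig : Fin 3 → Matrix (Fin 4) (Fin 4) ℝ)
    (hanti : ∀ i, (Sig i)ᵀ = -Sig i)
    (v : ℝ) (hv : v ≠ 0)
    (hwedge : ∀ i j, (∑ μ, ∑ ν, ∑ ρ, ∑ σ, eps4 μ ν ρ σ * Sig i μ ν * Sig j ρ σ)
      = 8 * v * (if i = j then 1 else 0))
    (horient : ∀ X Y : Fin 4 → ℝ,
      (∀ ν, (∑ μ, X μ * Sig 0 μ ν) = ∑ μ, Y μ * Sig 1 μ ν) →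
      (∑ μ, ∑ ν, Sig 2 μ ν * X μ * Y ν) ≤ 0) :
    (∀ X Y, urbantke v Sig X Y = urbantke v Sig Y X) ∧
    (∀ X X' Y, urbantke v Sig (X + X') Y = urbantke v Sig X Y + urbantke v Sig X' Y) ∧
    (∀ (c : ℝ) X Y, urbantke v Sig (c • X) Y = c * urbantke v Sig X Y) ∧
    (∀ X, X ≠ 0 → 0 < urbantke v Sig X X) := by
  have hpair (i j : Fin 3) (hij : i ≠ j) : wedgePairing (Sig i) (Sig j) = 0 := by
    rw [wedgePairing, hwedge, if_neg hij, mul_zero]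
  have hAB i j hij := mul_hodgeDual_anticomm (hanti i) (hanti j) (hpair i j hij)
  have hBA i j hij := hodgeDual_mul_anticomm (hanti i) (hanti j) (hpair i j hij)
  have hself (i : Fin 3) : Sig i * hodgeDual (Sig i) = -v • 1 := by
    rw [mul_hodgeDual_self (hanti i), wedgePairing, hwedge, if_pos rfl]
    norm_num
  have horient' (X Y : Fin 4 → ℝ) (h : X ᵥ* Sig 0 = Y ᵥ* Sig 1) : X ⬝ᵥ Sig 2 *ᵥ Y ≤ 0 :=
    sum_sum_mul_mul_eq_dotProduct_mulVec (Sig 2) X Y ▸ horient X Y (congrFun h)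
  have hg := urbantke_eq_dotProduct_urbantkeMatrix (v := v) hanti hAB hBA
  have hP := urbantkeMatrix_posDef hv hanti hself hAB hBA horient'
  refine ⟨fun X Y => ?_, fun X X' Y => ?_, fun c X Y => ?_, fun X hX => ?_⟩ <;> simp only [hg]
  · rw [dotProduct_mulVec, ← mulVec_transpose, urbantkeMatrix_transpose hanti hAB hBA,
      dotProduct_comm]
  · rw [add_dotProduct]
  · rw [smul_dotProduct, smul_eq_mul]
  · simpa using hP.dotProduct_mulVec_pos hX
end

section
/- Let V be the 12-dimensional real vector space of triples A = (A¹, A², A³) of vectors in ℝ⁴, and define the linear operator J₁ : V → V by J₁(A)ⁱ := ∑_{j,k} ε^{ijk} Sʲ A^k (matrix–vector products). Then J₁ ∘ J₁ = 2·id_V + J₁. Consequently J₁ is invertible with inverse J₁⁻¹ = (1/2)(J₁ − id_V). -/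
/-!
The matrices `Sⁱ` satisfy the quaternion relations `(Sⁱ)² = -1`, `S¹S² = S³`, `S²S³ = S¹`,
`S³S¹ = S²`, and therefore anticommute. Written out, `J₁(A)¹ = S²A³ - S³A²` (and cyclically);
expanding `J₁(J₁ A)` with these relations, the two terms `-(Sʲ)² Aⁱ` give `2Aⁱ` and the
products `SʲSⁱAʲ` of distinct matrices reassemble into `J₁(A)ⁱ`. The inverse formula then
follows from `J₁ ∘ (J₁ - id) = 2 id` and linearity of `J₁`.
-/

open Matrix BigOperators

/-- The canonical matrices `S¹, S², S³`. -/
def Scan : Fin 3 → Matrix (Fin 4) (Fin 4) ℝ :=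
  ![!![0, 0, 0, -1; 0, 0, -1, 0; 0, 1, 0, 0; 1, 0, 0, 0],
    !![0, 0, 1, 0; 0, 0, 0, -1; -1, 0, 0, 0; 0, 1, 0, 0],
    !![0, -1, 0, 0; 1, 0, 0, 0; 0, 0, 0, -1; 0, 0, 1, 0]]

/-- The operator `J₁` on triples of vectors in `ℝ⁴`:
`J₁(A)ⁱ = ∑_{jk} ε^{ijk} Sʲ Aᵏ`. -/
noncomputable def J1 (A : Fin 3 → Fin 4 → ℝ) : Fin 3 → Fin 4 → ℝ :=
  fun i => ∑ j, ∑ k, eps3 i j k • (Scan j).mulVec (A k)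

section LeviCivita

variable {n : Type*} [Fintype n]

noncomputable def leviCivitaAct (S : Fin 3 → Matrix n n ℝ) :
    (Fin 3 → n → ℝ) →ₗ[ℝ] (Fin 3 → n → ℝ) where
  toFun A i := ∑ j, ∑ k, eps3 i j k • S j *ᵥ A k
  map_add' A B := by
    ext i : 1
    simp only [Pi.add_apply, mulVec_add, smul_add, Finset.sum_add_distrib]
  map_smul' c A := by
    ext i : 1
    simp only [Pi.smul_apply, mulVec_smul, smul_comm _ c, Finset.smul_sum, RingHom.id_apply]

theorem leviCivitaAct_apply (S : Fin 3 → Matrix n n ℝ) (A : Fin 3 → n → ℝ) :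
    leviCivitaAct S A =
      ![S 1 *ᵥ A 2 - S 2 *ᵥ A 1, S 2 *ᵥ A 0 - S 0 *ᵥ A 2, S 0 *ᵥ A 1 - S 1 *ᵥ A 0] := by
  ext i : 1
  fin_cases i <;>
    simp [leviCivitaAct, Fin.sum_univ_three, eps3, det_fin_three, neg_add_eq_sub,
      ← sub_eq_add_neg]

theorem mul_eq_neg_of_mul_self_eq_neg_one {R : Type*} [Ring R] {a b c : R}
    (hb : b * b = -1) (hbc : b * c = a) : b * a = -c := by
  rw [← hbc, ← mul_assoc, hb, neg_one_mul]

variable [DecidableEq n]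

theorem leviCivitaAct_leviCivitaAct (S : Fin 3 → Matrix n n ℝ) (hsq : ∀ i, S i * S i = -1)
    (h01 : S 0 * S 1 = S 2) (h12 : S 1 * S 2 = S 0) (h20 : S 2 * S 0 = S 1)
    (A : Fin 3 → n → ℝ) :
    leviCivitaAct S (leviCivitaAct S A) = (2 : ℝ) • A + leviCivitaAct S A := by
  have h10 := mul_eq_neg_of_mul_self_eq_neg_one (hsq 1) h12
  have h21 := mul_eq_neg_of_mul_self_eq_neg_one (hsq 2) h20
  have h02 := mul_eq_neg_of_mul_self_eq_neg_one (hsq 0) h01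
  rw [leviCivitaAct_apply, leviCivitaAct_apply]
  ext i : 1
  fin_cases i <;>
    simp only [Fin.zero_eta, Fin.mk_one, Fin.reduceFinMk, Fin.isValue, cons_val, cons_val_zero,
      cons_val_one, Pi.add_apply, Pi.smul_apply, mulVec_sub, mulVec_mulVec, hsq, h01, h12, h20, h10,
      h21, h02, neg_mulVec, one_mulVec] <;>
    module

end LeviCivita

theorem J1_eq_leviCivitaAct : J1 = leviCivitaAct Scan := rfl

theorem Scan_mul_self (i : Fin 3) : Scan i * Scan i = -1 := by
  fin_cases i <;> ext a b <;> fin_cases a <;> fin_cases b <;>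
    simp [Scan, mul_apply, Fin.sum_univ_four]

theorem Scan_zero_mul_one : Scan 0 * Scan 1 = Scan 2 := by
  ext a b; fin_cases a <;> fin_cases b <;> simp [Scan, mul_apply, Fin.sum_univ_four]

theorem Scan_one_mul_two : Scan 1 * Scan 2 = Scan 0 := by
  ext a b; fin_cases a <;> fin_cases b <;> simp [Scan, mul_apply, Fin.sum_univ_four]

theorem Scan_two_mul_zero : Scan 2 * Scan 0 = Scan 1 := by
  ext a b; fin_cases a <;> fin_cases b <;> simp [Scan, mul_apply, Fin.sum_univ_four]

/-- `J₁² = 2·id + J₁`; consequently `J₁` is invertible with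
inverse `(1/2)(J₁ − id)`. -/
theorem J1_quadratic_and_inverse :
    (∀ A : Fin 3 → Fin 4 → ℝ, J1 (J1 A) = (2 : ℝ) • A + J1 A) ∧
    (∀ A : Fin 3 → Fin 4 → ℝ, J1 ((1 / 2 : ℝ) • (J1 A - A)) = A) ∧
    (∀ A : Fin 3 → Fin 4 → ℝ, (1 / 2 : ℝ) • (J1 (J1 A) - J1 A) = A) := by
  have hJ : ∀ A, J1 (J1 A) = (2 : ℝ) • A + J1 A :=
    leviCivitaAct_leviCivitaAct Scan Scan_mul_self Scan_zero_mul_one Scan_one_mul_two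
      Scan_two_mul_zero
  refine ⟨hJ, fun A => ?_, fun A => ?_⟩
  · rw [J1_eq_leviCivitaAct, map_smul, map_sub, ← J1_eq_leviCivitaAct, hJ]
    module
  · rw [hJ]
    module
end

section
/- Let B¹, B², B³ be antisymmetric real 4×4 matrices such that: (i) ∑_{μ,ν} Sⁱ_{μν} Bʲ_{μν} + ∑_{μ,ν} Sʲ_{μν} Bⁱ_{μν} = 0 for all i, j ∈ {1,2,3}; and (ii) ∑_{i=1}^{3} (Sⁱ Bⁱ + Bⁱ Sⁱ) = 0 (the zero 4×4 matrix). Then there exists c ∈ ℝ³ such that Bⁱ = ∑_{j,k} ε^{ijk} c_j Sᵏ for i = 1,2,3. (This is the algebraic core of the theorem that the covariant derivative of an SU(2)-structure satisfies ∇_μ Σⁱ = −ε^{ijk} Aʲ_μ Σᵏ for an SO(3) connection A, since conditions (i) and (ii) are exactly the vanishing of the S⁴₊, ℝ, and S²₊⊗S²₋ components of ∇_μ Σ that follow from ∇(Σⁱ·Σʲ) = 0 and ∇g = 0.) -/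
open Matrix BigOperators

/-!
The matrices `Sⁱ` span the self-dual antisymmetric matrices `Λ²₊`; completing them by an
anti-self-dual triple `Tᵏ` gives a Frobenius-orthogonal basis of all antisymmetric `4 × 4`
matrices, so `Bⁱ = aᵢₖ Sᵏ + bᵢₖ Tᵏ`. Condition (i) says exactly that `a` is antisymmetric,
i.e. `aᵢₖ = εᵢⱼₖ cⱼ`. The `Sⁱ` anticommute pairwise and commute with the `Tᵏ`, so with
`aᵢᵢ = 0` condition (ii) becomes `∑ bᵢₖ SⁱTᵏ = 0`; the nine products `SⁱTᵏ` are linearly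
independent, hence `b = 0`.
-/

-- `Tᵏ_{4k} = 1` and `T¹_{23} = T²_{31} = T³_{12} = 1`: the anti-self-dual partners of `Sᵏ`.
def Tcan : Fin 3 → Matrix (Fin 4) (Fin 4) ℝ :=
  ![!![0, 0, 0, -1; 0, 0, 1, 0; 0, -1, 0, 0; 1, 0, 0, 0],
    !![0, 0, -1, 0; 0, 0, 0, -1; 1, 0, 0, 0; 0, 1, 0, 0],
    !![0, 1, 0, 0; -1, 0, 0, 0; 0, 0, 0, -1; 0, 0, 1, 0]]

def frobInner {n : Type*} [Fintype n] (A B : Matrix n n ℝ) : ℝ := ∑ μ, ∑ ν, A μ ν * B μ ν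

theorem exists_eps3_of_transpose_eq_neg {a : Matrix (Fin 3) (Fin 3) ℝ} (ha : aᵀ = -a) :
    ∃ c : Fin 3 → ℝ, ∀ i k, a i k = ∑ j, eps3 i j k * c j := by
  have h : ∀ i k, a k i = -a i k := fun i k => by simpa using congrFun (congrFun ha i) k
  refine ⟨![a 2 1, a 0 2, a 1 0], fun i k => ?_⟩
  fin_cases i <;> fin_cases k <;> simp [eps3, det_fin_three, Fin.sum_univ_three] <;>
    linarith [h 0 0, h 1 1, h 2 2, h 0 1, h 0 2, h 1 2]

theorem Scan_anticomm {i k : Fin 3} (h : i ≠ k) : Scan i * Scan k = -(Scan k * Scan i) := by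
  fin_cases i <;> fin_cases k <;> first
    | exact absurd rfl h
    | simp [Scan, cons_mul, vecMul_cons, vecHead, vecTail]

theorem Scan_commute_Tcan (i k : Fin 3) : Commute (Scan i) (Tcan k) := by
  fin_cases i <;> fin_cases k <;>
    simp [Commute, SemiconjBy, Scan, Tcan, cons_mul, vecMul_cons, vecHead, vecTail]

theorem eq_sum_Scan_add_sum_Tcan {A : Matrix (Fin 4) (Fin 4) ℝ} (hA : Aᵀ = -A) :
    A = ∑ k, (frobInner (Scan k) A / 4) • Scan k + ∑ k, (frobInner (Tcan k) A / 4) • Tcan k := by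
  have h : ∀ μ ν, A ν μ = -A μ ν := fun μ ν => by simpa using congrFun (congrFun hA μ) ν
  ext μ ν
  fin_cases μ <;> fin_cases ν <;>
    simp [frobInner, Scan, Tcan, Fin.sum_univ_four, Fin.sum_univ_three] <;>
    linarith [h 0 0, h 1 1, h 2 2, h 3 3, h 0 1, h 0 2, h 0 3, h 1 2, h 1 3, h 2 3]

theorem eq_zero_of_sum_smul_Scan_mul_Tcan {b : Matrix (Fin 3) (Fin 3) ℝ}
    (hb : ∑ i, ∑ k, b i k • (Scan i * Tcan k) = 0) : b = 0 := by
  have e : ∀ μ ν, (∑ i, ∑ k, b i k • (Scan i * Tcan k)) μ ν = 0 := by simp [hb]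
  have e00 := e 0 0; have e01 := e 0 1; have e02 := e 0 2; have e03 := e 0 3
  have e11 := e 1 1; have e12 := e 1 2; have e13 := e 1 3; have e22 := e 2 2
  have e23 := e 2 3
  simp [Scan, Tcan, mul_apply, Fin.sum_univ_four, Fin.sum_univ_three, Matrix.sum_apply]
    at e00 e01 e02 e03 e11 e12 e13 e22 e23
  ext i k
  fin_cases i <;> fin_cases k <;> simp <;> linarith

theorem Scan_mul_add_mul_Scan {a b : Fin 3 → ℝ} {i : Fin 3} (ha : a i = 0) :
    Scan i * (∑ k, a k • Scan k + ∑ k, b k • Tcan k)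
      + (∑ k, a k • Scan k + ∑ k, b k • Tcan k) * Scan i
      = (2 : ℝ) • ∑ k, b k • (Scan i * Tcan k) := by
  have hSS : ∀ k, a k • (Scan i * Scan k + Scan k * Scan i) = 0 := by
    intro k
    rcases eq_or_ne i k with rfl | hik
    · simp [ha]
    · simp [Scan_anticomm hik]
  calc _ = ∑ k, (a k • (Scan i * Scan k + Scan k * Scan i)
          + b k • (Scan i * Tcan k + Tcan k * Scan i)) := by
        simp only [mul_add, add_mul, Finset.mul_sum, Finset.sum_mul, mul_smul_comm,
          smul_mul_assoc, smul_add, Finset.sum_add_distrib]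
        abel
    _ = ∑ k, b k • ((2 : ℝ) • (Scan i * Tcan k)) := by
        simp only [hSS, zero_add, (Scan_commute_Tcan i _).eq, two_smul]
    _ = (2 : ℝ) • ∑ k, b k • (Scan i * Tcan k) := by
        simp only [Finset.smul_sum, smul_comm (2 : ℝ)]

/-- the algebraic core of the intrinsic-torsion theorem: an
antisymmetric triple `B` whose `S⁴₊ ⊕ ℝ` components (condition (i)) and
`S²₊ ⊗ S²₋` component (condition (ii)) vanish is of the form
`Bⁱ = ε^{ijk} c_j Sᵏ`. -/
theorem torsion_algebraic_core
    (B : Fin 3 → Matrix (Fin 4) (Fin 4) ℝ)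
    (hanti : ∀ i, (B i)ᵀ = -B i)
    (h1 : ∀ i j : Fin 3,
      (∑ μ, ∑ ν, Scan i μ ν * B j μ ν) + (∑ μ, ∑ ν, Scan j μ ν * B i μ ν) = 0)
    (h2 : (∑ i, (Scan i * B i + B i * Scan i)) = 0) :
    ∃ c : Fin 3 → ℝ, ∀ i, B i = ∑ j, ∑ k, (eps3 i j k * c j) • Scan k := by
  set a : Matrix (Fin 3) (Fin 3) ℝ := .of fun i k => frobInner (Scan k) (B i) / 4
  set b : Matrix (Fin 3) (Fin 3) ℝ := .of fun i k => frobInner (Tcan k) (B i) / 4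
  have hB : ∀ i, B i = ∑ k, a i k • Scan k + ∑ k, b i k • Tcan k := fun i =>
    eq_sum_Scan_add_sum_Tcan (hanti i)
  have ha : aᵀ = -a := by
    ext i k
    simp only [a, transpose_apply, of_apply, Matrix.neg_apply, frobInner]
    linarith [h1 i k]
  have hb : b = 0 := by
    have hdiag : ∀ i, a i i = 0 := fun i => by
      simp only [a, of_apply, frobInner]
      linarith [h1 i i]
    apply eq_zero_of_sum_smul_Scan_mul_Tcan
    have h2' : (2 : ℝ) • ∑ i, ∑ k, b i k • (Scan i * Tcan k) = 0 := by
      rw [← h2, Finset.smul_sum]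
      refine Finset.sum_congr rfl fun i _ => ?_
      rw [hB i, Scan_mul_add_mul_Scan (hdiag i)]
    exact (smul_eq_zero.mp h2').resolve_left two_ne_zero
  obtain ⟨c, hc⟩ := exists_eps3_of_transpose_eq_neg ha
  refine ⟨c, fun i => ?_⟩
  rw [hB i, hb]
  simp only [hc, Finset.sum_smul, Matrix.zero_apply, zero_smul, Finset.sum_const_zero, add_zero]
  exact Finset.sum_comm
end

section
/- Let R : {1,2,3,4}⁴ → ℝ be an algebraic curvature tensor, i.e. R_{μνρσ} = −R_{νμρσ}, R_{μνρσ} = −R_{μνσρ}, R_{μνρσ} = R_{ρσμν}, and R_{μνρσ} + R_{μρσν} + R_{μσνρ} = 0 for all indices. Define the Ricci tensor Ric_{μν} := ∑_α R_{μανα}. Then for all μ, ν: ∑_{i=1}^{3} ∑_{α,ρ,σ} Sⁱ_{μα} R_{ανρσ} Sⁱ_{ρσ} = −2 Ric_{μν}. -/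
/-!
The matrices `Sⁱ` are self-dual and satisfy the 't Hooft identity
`∑ᵢ Sⁱ_{μα} Sⁱ_{ρσ} = δ_{μρ} δ_{ασ} - δ_{μσ} δ_{αρ} + ε_{μαρσ}`.
Contracted with `R_{ανρσ}`, the Kronecker part gives `-2 Ric_{μν}` by the pair and
antisymmetries of `R`, while the `ε` part is invariant under cyclic permutations of `(α, ρ, σ)`
and is therefore annihilated by the first Bianchi identity.
-/

open Matrix BigOperators

open Finset

theorem sum_sum_sum_rotate {ι M : Type*} [Fintype ι] [AddCommMonoid M] (f : ι → ι → ι → M) :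
    ∑ a, ∑ b, ∑ c, f b c a = ∑ a, ∑ b, ∑ c, f a b c := by
  rw [sum_comm]
  exact sum_congr rfl fun _ _ => sum_comm

theorem sum_cyclic_mul_eq_zero {ι K : Type*} [Fintype ι] [CommRing K] [NoZeroDivisors K]
    [CharZero K] (E T : ι → ι → ι → K) (hE : ∀ a b c, E a b c = E b c a)
    (hT : ∀ a b c, T a b c + T b c a + T c a b = 0) :
    ∑ a, ∑ b, ∑ c, E a b c * T a b c = 0 := by
  have rotate : ∀ F : ι → ι → ι → K,
      ∑ a, ∑ b, ∑ c, E a b c * F b c a = ∑ a, ∑ b, ∑ c, E a b c * F a b c := fun F =>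
    (sum_congr rfl fun a _ => sum_congr rfl fun b _ => sum_congr rfl fun c _ => by rw [hE]).trans
      (sum_sum_sum_rotate fun a b c => E a b c * F a b c)
  have h₁ := rotate T
  have h₂ := (rotate fun a b c => T b c a).trans h₁
  have : 3 * ∑ a, ∑ b, ∑ c, E a b c * T a b c = 0 :=
    calc 3 * ∑ a, ∑ b, ∑ c, E a b c * T a b c
        = ∑ a, ∑ b, ∑ c, E a b c * (T a b c + T b c a + T c a b) := by
          simp only [mul_add, sum_add_distrib, h₁, h₂]; ring
      _ = 0 := by simp only [hT, mul_zero, sum_const_zero]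
  simpa using this

theorem sum_kronecker_antisymm_mul {ι K : Type*} [Fintype ι] [DecidableEq ι] [CommRing K]
    (R : ι → ι → ι → ι → K)
    (hA2 : ∀ μ ν ρ σ, R μ ν ρ σ = -R μ ν σ ρ)
    (hPair : ∀ μ ν ρ σ, R μ ν ρ σ = R ρ σ μ ν) (μ ν : ι) :
    ∑ α, ∑ ρ, ∑ σ, ((1 : Matrix ι ι K) μ ρ * (1 : Matrix ι ι K) α σ
      - (1 : Matrix ι ι K) μ σ * (1 : Matrix ι ι K) α ρ) * R α ν ρ σ
      = -2 * ∑ α, R μ α ν α := by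
  have h₁ : ∀ α, R α ν μ α = -R μ α ν α := fun α => by rw [hPair, hA2]
  have h₂ : ∀ α, R α ν α μ = R μ α ν α := fun α => by rw [hA2, h₁, neg_neg]
  simp only [one_apply, mul_ite, mul_one, mul_zero, sub_mul, ite_mul, one_mul, zero_mul,
    sum_sub_distrib, sum_ite_eq, mem_univ, ↓reduceIte, sum_ite_irrel, sum_const_zero, h₁, h₂,
    sum_neg_distrib, neg_mul]
  ring

/-- By the 't Hooft identity this is the Levi-Civita symbol `ε_{μαρσ}`. -/
def scanEpsilon (μ α ρ σ : Fin 4) : ℝ :=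
  ∑ i, Scan i μ α * Scan i ρ σ
    - ((1 : Matrix (Fin 4) (Fin 4) ℝ) μ ρ * (1 : Matrix (Fin 4) (Fin 4) ℝ) α σ
      - (1 : Matrix (Fin 4) (Fin 4) ℝ) μ σ * (1 : Matrix (Fin 4) (Fin 4) ℝ) α ρ)

theorem scanEpsilon_rotate (μ α ρ σ : Fin 4) : scanEpsilon μ α ρ σ = scanEpsilon μ ρ σ α := by
  simp only [scanEpsilon, Fin.sum_univ_three, one_apply]
  fin_cases μ <;> fin_cases α <;> fin_cases ρ <;> fin_cases σ <;>
    simp only [Scan, Fin.isValue, Fin.reduceFinMk, of_apply, cons_val_zero, cons_val_one,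
      cons_val_two, cons_val_three, head_cons, tail_cons, Fin.reduceEq, if_true, if_false, mul_one,
      mul_zero, mul_neg, neg_neg, neg_zero, add_zero, zero_add, sub_zero, zero_sub, sub_self]

theorem sum_Scan_mul_Scan_mul (μ : Fin 4) (X : Fin 4 → Fin 4 → Fin 4 → ℝ) :
    ∑ i, ∑ α, ∑ ρ, ∑ σ, Scan i μ α * X α ρ σ * Scan i ρ σ
      = ∑ α, ∑ ρ, ∑ σ, ((1 : Matrix (Fin 4) (Fin 4) ℝ) μ ρ * (1 : Matrix (Fin 4) (Fin 4) ℝ) α σ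
          - (1 : Matrix (Fin 4) (Fin 4) ℝ) μ σ * (1 : Matrix (Fin 4) (Fin 4) ℝ) α ρ) * X α ρ σ
        + ∑ α, ∑ ρ, ∑ σ, scanEpsilon μ α ρ σ * X α ρ σ := by
  simp only [scanEpsilon, sub_mul, sum_sub_distrib, sum_mul, add_sub_cancel]
  rw [sum_comm]
  refine sum_congr rfl fun α _ => ?_
  rw [sum_comm]
  refine sum_congr rfl fun ρ _ => ?_
  rw [sum_comm]
  exact sum_congr rfl fun σ _ => sum_congr rfl fun i _ => by ring

/-- for any algebraic curvature tensor `R`,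
`∑ᵢ Sⁱ_{μα} R_{ανρσ} Sⁱ_{ρσ} = −2 Ric_{μν}`. -/
theorem ricci_from_selfdual_curvature
    (R : Fin 4 → Fin 4 → Fin 4 → Fin 4 → ℝ)
    (hA1 : ∀ μ ν ρ σ, R μ ν ρ σ = -R ν μ ρ σ)
    (hA2 : ∀ μ ν ρ σ, R μ ν ρ σ = -R μ ν σ ρ)
    (hPair : ∀ μ ν ρ σ, R μ ν ρ σ = R ρ σ μ ν)
    (hBianchi : ∀ μ ν ρ σ, R μ ν ρ σ + R μ ρ σ ν + R μ σ ν ρ = 0) :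
    ∀ μ ν, (∑ i, ∑ α, ∑ ρ, ∑ σ, Scan i μ α * R α ν ρ σ * Scan i ρ σ)
      = -2 * (∑ α, R μ α ν α) := by
  intro μ ν
  have bianchi : ∑ α, ∑ ρ, ∑ σ, scanEpsilon μ α ρ σ * R α ν ρ σ = 0 := by
    simp only [hA1 _ ν, mul_neg, sum_neg_distrib,
      sum_cyclic_mul_eq_zero (scanEpsilon μ) (R ν) (scanEpsilon_rotate μ) (hBianchi ν), neg_zero]
  rw [sum_Scan_mul_Scan_mul μ (fun α ρ σ => R α ν ρ σ), bianchi, add_zero,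
    sum_kronecker_antisymm_mul R hA2 hPair]
end
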